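/- arXiv:1209.2776 — 3 statements merged into one kernel-verified Lean document; each statement's English description precedes it below -/
import Mathlib

section
/- If R : V → W is a coproduct-preserving functor between categories with coproducts, then the induced functor GR : GV → GW on categories of enriched graphs is distributive and path-like. -/
open CategoryTheory Limits

universe v u w

/-- A `V`-enriched graph: a type of objects together with a hom-object of `V`
for each ordered pair of objects. -/
structure EGraph (V : Type u) [Category.{v} V] : Type (max u (v + 1)) where
  obj : Type v
  hom : obj → obj → V

namespace EGraph

variable {V : Type u} [Category.{v} V] {W : Type w} [Category.{v} W]

/-- Morphisms of enriched graphs. -/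
structure Hom (X Y : EGraph V) : Type (max u v) where
  f : X.obj → Y.obj
  φ : ∀ a b : X.obj, X.hom a b ⟶ Y.hom (f a) (f b)

theorem Hom.ext' {X Y : EGraph V} {F G : Hom X Y} (h : F.f = G.f)
    (h2 : HEq F.φ G.φ) : F = G := by
  cases F; cases G; cases h; cases h2; rfl

instance : Category (EGraph V) where
  Hom := Hom
  id X := ⟨_root_.id, fun a b => 𝟙 _⟩
  comp F G := ⟨G.f ∘ F.f, fun a b => F.φ a b ≫ G.φ _ _⟩
  id_comp F := Hom.ext' rfl (heq_of_eq (by funext a b; exact Category.id_comp _))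
  comp_id F := Hom.ext' rfl (heq_of_eq (by funext a b; exact Category.comp_id _))
  assoc F G H := Hom.ext' rfl (heq_of_eq (by funext a b; exact Category.assoc _ _ _))

/-- The functor `G V ⥤ G W` induced by a functor `V ⥤ W`, applying it to all homs. -/
def mapG (R : V ⥤ W) : EGraph V ⥤ EGraph W where
  obj X := ⟨X.obj, fun a b => R.obj (X.hom a b)⟩
  map F := ⟨F.f, fun a b => R.map (F.φ a b)⟩
  map_id X := Hom.ext' rfl (heq_of_eq (by funext a b; exact R.map_id _))
  map_comp F G := Hom.ext' rfl (heq_of_eq (by funext a b; exact R.map_comp _ _))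

/-- A functor between categories of enriched graphs is *over `Set`* when it commutes
with the object-set functors. -/
def OverSet (T : EGraph V ⥤ EGraph W) : Prop :=
  (∀ X : EGraph V, (T.obj X).obj = X.obj) ∧
    ∀ {X Y : EGraph V} (F : X ⟶ Y), HEq (T.map F).f (Hom.f F)

theorem cast_apply_heq {α α' : Type v} {β β' : Type v} (hα : α = α') (hβ : β = β')
    {f : α → β} {g : α' → β'} (h : HEq f g) (p : α) :
    f p = cast hβ.symm (g (cast hα p)) := by
  subst hα; subst hβ; cases h; simp

theorem map_f_eq (T : EGraph V ⥤ EGraph W) (hT : OverSet T) {X Y : EGraph V}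
    (F : X ⟶ Y) (p : X.obj) :
    (T.map F).f (cast (hT.1 X).symm p) = cast (hT.1 Y).symm (F.f p) := by
  rw [cast_apply_heq (hT.1 X) (hT.1 Y) (hT.2 F)]
  congr 2
  simp

variable [HasInitial V]

noncomputable section

/-- The `V`-graph `(X₁,…,Xₙ)` on objects `{0,…,n}`, with `Xᵢ` as the hom from
`i-1` to `i` and the initial object elsewhere. -/
def seq {n : ℕ} (Xs : Fin n → V) : EGraph V where
  obj := ULift.{v} (Fin (n + 1))
  hom i j := if h : (i.down : ℕ) + 1 = (j.down : ℕ) ∧ (i.down : ℕ) < n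
    then Xs ⟨i.down, h.2⟩ else ⊥_ V

/-- The functor `T̄ₙ` associated to a functor over `Set`. -/
def Tbar (T : EGraph V ⥤ EGraph W) (hT : OverSet T) {n : ℕ} (Xs : Fin n → V) : W :=
  (T.obj (seq Xs)).hom (cast (hT.1 _).symm (ULift.up 0))
    (cast (hT.1 _).symm (ULift.up (Fin.last n)))

/-- The identity-on-objects morphism of sequence graphs induced by a family of maps. -/
def seqHom {n : ℕ} {Xs Ys : Fin n → V} (g : ∀ i, Xs i ⟶ Ys i) : seq Xs ⟶ seq Ys where
  f := _root_.id
  φ a b :=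
    if h : (a.down : ℕ) + 1 = (b.down : ℕ) ∧ (a.down : ℕ) < n then
      eqToHom (dif_pos h) ≫ g ⟨a.down, h.2⟩ ≫
        eqToHom (show Ys ⟨a.down, h.2⟩ = (seq Ys).hom (_root_.id a) (_root_.id b) by
          simp only [seq, id_eq]; split_ifs <;> first | rfl | exact absurd h ‹_› | exact absurd ‹_› h)
    else eqToHom (show (seq Xs).hom a b = (seq Ys).hom (_root_.id a) (_root_.id b) by
      simp only [seq, id_eq]; split_ifs <;> first | rfl | exact absurd h ‹_› | exact absurd ‹_› h)

/-- The family of maps `update Xs i₀ A ⟶ update Xs i₀ B` which is `g` in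
position `i₀` and the identity elsewhere. -/
def updHom {n : ℕ} (Xs : Fin n → V) (i₀ : Fin n) {A B : V} (g : A ⟶ B) :
    ∀ i, Function.update Xs i₀ A i ⟶ Function.update Xs i₀ B i := fun i =>
  if h : i = i₀ then
    eqToHom (by rw [h, Function.update_self]) ≫ g ≫
      eqToHom (by rw [h, Function.update_self])
  else eqToHom (by rw [Function.update_of_ne h, Function.update_of_ne h])

/-- A functor over `Set` between categories of enriched graphs is *distributive* when
each `T̄ₙ` preserves coproducts in each variable. -/
def Distributive (T : EGraph V ⥤ EGraph W) (hT : OverSet T) : Prop :=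
  ∀ (n : ℕ) (i₀ : Fin n) (Xs : Fin n → V) {J : Type v} (Y : J → V)
    (c : Cofan Y) (_ : IsColimit c),
    Nonempty (IsColimit (Cofan.mk (Tbar T hT (Function.update Xs i₀ c.pt))
      (fun j =>
        (T.map (seqHom (updHom Xs i₀ (c.inj j)))).φ (cast (hT.1 _).symm (ULift.up 0))
            (cast (hT.1 _).symm (ULift.up (Fin.last n))) ≫
          eqToHom (by erw [map_f_eq T hT, map_f_eq T hT]; dsimp only [seqHom, Tbar, id_eq]; rfl))))

/-- The morphism `x̄ : (X(x₀,x₁),…,X(x_{n-1},xₙ)) ⟶ X` associated to a path of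
objects of `X`. -/
def pathHom {X : EGraph V} {n : ℕ} (x : Fin (n + 1) → X.obj) :
    seq (fun i : Fin n => X.hom (x i.castSucc) (x i.succ)) ⟶ X where
  f p := x p.down
  φ a b :=
    if h : (a.down : ℕ) + 1 = (b.down : ℕ) ∧ (a.down : ℕ) < n then
      eqToHom (by
        dsimp only [seq]
        rw [dif_pos h]
        exact congrArg₂ X.hom (congrArg x (Fin.ext (by simp)))
          (congrArg x (Fin.ext (by simpa using h.1))))
    else eqToHom (dif_neg h) ≫ initial.to _

/-- Index type for the paths from `a` to `b` in the graph `X`. -/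
def PathIdx (X : EGraph V) (a b : X.obj) : Type v :=
  Σ n : ℕ, { x : Fin (n + 1) → X.obj // x 0 = a ∧ x (Fin.last n) = b }

/-- A functor over `Set` between categories of enriched graphs is *path-like* when the
canonical maps `∐ T̄ᵢ X(x_{i-1},xᵢ) ⟶ TX(a,b)` are isomorphisms (i.e. exhibit
`TX(a,b)` as the coproduct). -/
def PathLike (T : EGraph V ⥤ EGraph W) (hT : OverSet T) : Prop :=
  ∀ (X : EGraph V) (a b : X.obj),
    Nonempty (IsColimit (Cofan.mk
      ((T.obj X).hom (cast (hT.1 X).symm a) (cast (hT.1 X).symm b))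
      (fun p : PathIdx X a b =>
        (T.map (pathHom p.2.1)).φ (cast (hT.1 _).symm (ULift.up 0))
            (cast (hT.1 _).symm (ULift.up (Fin.last p.1))) ≫
          eqToHom (by
            erw [map_f_eq T hT, map_f_eq T hT]
            exact congrArg₂ _ (congrArg _ p.2.2.1) (congrArg _ p.2.2.2)))))

end
end EGraph

namespace EGraph

variable {V : Type u} [Category.{v} V] {W : Type w} [Category.{v} W]

theorem mapG_overSet (R : V ⥤ W) : OverSet (mapG R) :=
  ⟨fun _ => rfl, fun _ => HEq.rfl⟩

end EGraph

/-!
In the sequence graph `(X₁,…,Xₙ)` the hom from `0` to `n` is `X₁` if `n = 1` and initial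
otherwise. Hence already in `V` the functor `(X₁,…,Xₙ) ↦ (X₁,…,Xₙ)(0,n)` preserves coproducts
in each variable (for `n ≠ 1` a coproduct of initial objects is initial), and among the path
summands of `X(a,b)` only the one-edge path `(a,b)` is non-initial, and its leg is an
isomorphism. Since `GR` applies `R` homwise, its `T̄ₙ` and its path cofans are the images of
these cofans under `R`, which preserves coproducts.
-/

namespace CategoryTheory.Limits

variable {C : Type*} [Category C] {J : Type*}

noncomputable def Cofan.isColimitOfIsInitial {Y : J → C} (c : Cofan Y) (hpt : IsInitial c.pt)
    (hY : ∀ j, IsInitial (Y j)) : IsColimit c :=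
  Cofan.IsColimit.mk c (fun t => hpt.to t.pt) (fun _ j => (hY j).hom_ext _ _)
    (fun _ _ _ => hpt.hom_ext _ _)

noncomputable def Cofan.isColimitOfIsIsoOfIsInitial {Y : J → C} (c : Cofan Y) (j₀ : J)
    [IsIso (c.inj j₀)] (hY : ∀ j, j ≠ j₀ → IsInitial (Y j)) : IsColimit c :=
  Cofan.IsColimit.mk c (fun t => inv (c.inj j₀) ≫ t.inj j₀)
    (fun t j => by
      by_cases h : j = j₀
      · subst h
        simp
      · exact (hY j h).hom_ext _ _)
    (fun t m hm => by simp [← hm j₀])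

noncomputable def Cofan.isColimitMkEqToHom {Y Y' : J → C} {c : Cofan Y} (hc : IsColimit c)
    (hY : ∀ j, Y' j = Y j) {P : C} (hP : c.pt = P) :
    IsColimit (Cofan.mk P fun j => eqToHom (hY j) ≫ c.inj j ≫ eqToHom hP) := by
  obtain rfl : Y' = Y := funext hY
  subst hP
  simp only [eqToHom_refl, Category.id_comp, Category.comp_id]
  exact hc.ofIsoColimit (Cofan.ext (Iso.refl _))

end CategoryTheory.Limits

namespace EGraph

variable {V : Type u} [Category.{v} V] {W : Type w} [Category.{v} W]

section Seq

theorem updHom_self {n : ℕ} (Xs : Fin n → V) (i₀ : Fin n) {A B : V} (g : A ⟶ B) :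
    updHom Xs i₀ g i₀ = eqToHom (Function.update_self i₀ A Xs) ≫ g ≫
      eqToHom (Function.update_self i₀ B Xs).symm :=
  dif_pos rfl

variable [HasInitial V]

theorem seq_hom_zero_last_of_ne_one {n : ℕ} (Xs : Fin n → V) (hn : n ≠ 1) :
    (seq Xs).hom (ULift.up 0) (ULift.up (Fin.last n)) = ⊥_ V :=
  dif_neg (by simp only [Fin.val_zero, Fin.val_last]; omega)

noncomputable def isInitialSeqHomZeroLast {n : ℕ} (Xs : Fin n → V) (hn : n ≠ 1) :
    IsInitial ((seq Xs).hom (ULift.up 0) (ULift.up (Fin.last n))) :=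
  initialIsInitial.ofIso (eqToIso (seq_hom_zero_last_of_ne_one Xs hn).symm)

theorem seq_hom_zero_last_one (Xs : Fin 1 → V) :
    (seq Xs).hom (ULift.up 0) (ULift.up (Fin.last 1)) = Xs 0 := by
  dsimp only [seq]
  rw [dif_pos (by simp)]
  rfl

theorem seqHom_φ_zero_last_one {Xs Ys : Fin 1 → V} (g : ∀ i, Xs i ⟶ Ys i) :
    (seqHom g).φ (ULift.up 0) (ULift.up (Fin.last 1)) =
      eqToHom (seq_hom_zero_last_one Xs) ≫ g 0 ≫ eqToHom (seq_hom_zero_last_one Ys).symm := by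
  dsimp only [seqHom]
  rw [dif_pos (by simp)]
  rfl

noncomputable def isColimitSeqUpdateCofan {n : ℕ} (i₀ : Fin n) (Xs : Fin n → V) {J : Type v}
    {Y : J → V} {c : Cofan Y} (hc : IsColimit c) :
    IsColimit (Cofan.mk ((seq (Function.update Xs i₀ c.pt)).hom (ULift.up 0)
      (ULift.up (Fin.last n))) fun j =>
        (seqHom (updHom Xs i₀ (c.inj j))).φ (ULift.up 0) (ULift.up (Fin.last n))) :=
  match n, i₀ with
  | 1, i₀ => by
    obtain rfl : i₀ = 0 := Subsingleton.elim _ _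
    simp only [seqHom_φ_zero_last_one, updHom_self, Category.assoc, eqToHom_trans,
      eqToHom_trans_assoc]
    exact Cofan.isColimitMkEqToHom hc _ _
  | n + 2, i₀ =>
    Cofan.isColimitOfIsInitial _
      (isInitialSeqHomZeroLast (Function.update Xs i₀ c.pt) (by omega))
      fun j => isInitialSeqHomZeroLast (Function.update Xs i₀ (Y j)) (by omega)

end Seq

section Paths

variable (X : EGraph V)

def PathIdx.edge (a b : X.obj) : PathIdx X a b :=
  ⟨1, ![a, b], rfl, rfl⟩

theorem PathIdx.eq_edge_of_length_eq_one {a b : X.obj} (p : PathIdx X a b) (h : p.1 = 1) :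
    p = PathIdx.edge X a b := by
  obtain ⟨n, x, h0, h1⟩ := p
  subst h
  congr
  ext i
  fin_cases i
  exacts [h0, h1]

variable [HasInitial V]

theorem isIso_pathHom_φ_zero_last_one (x : Fin 2 → X.obj) :
    IsIso ((pathHom x).φ (ULift.up 0) (ULift.up (Fin.last 1))) := by
  dsimp only [pathHom]
  rw [dif_pos (by simp)]
  infer_instance

noncomputable def pathCofan (a b : X.obj) :
    Cofan fun p : PathIdx X a b =>
      (seq fun i : Fin p.1 => X.hom (p.2.1 i.castSucc) (p.2.1 i.succ)).hom (ULift.up 0)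
        (ULift.up (Fin.last p.1)) :=
  Cofan.mk (X.hom a b) fun p => (pathHom p.2.1).φ (ULift.up 0) (ULift.up (Fin.last p.1)) ≫
    eqToHom (congrArg₂ X.hom p.2.2.1 p.2.2.2)

noncomputable def isColimitPathCofan (a b : X.obj) : IsColimit (pathCofan X a b) :=
  have : IsIso ((pathCofan X a b).inj (PathIdx.edge X a b)) := by
    dsimp only [pathCofan, Cofan.inj, Cofan.mk_ι_app]
    exact IsIso.comp_isIso' (isIso_pathHom_φ_zero_last_one X ![a, b]) inferInstance
  Cofan.isColimitOfIsIsoOfIsInitial _ (PathIdx.edge X a b) fun p hp =>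
    isInitialSeqHomZeroLast _ fun h => hp (p.eq_edge_of_length_eq_one X h)

end Paths

theorem mapG_distributive_and_pathLike_general
    [HasInitial V] (R : V ⥤ W) (hR : ∀ J : Type v, PreservesColimitsOfShape (Discrete J) R) :
    Distributive (mapG R) (mapG_overSet R) ∧ PathLike (mapG R) (mapG_overSet R) := by
  -- The `cast`s and `eqToHom`s in `Distributive` and `PathLike` are, for `mapG R`, between
  -- definitionally equal objects.
  constructor
  · intro n i₀ Xs J Y c hc
    have := hR J
    refine ⟨(isColimitCofanMkObjOfIsColimit R _ _
      (isColimitSeqUpdateCofan i₀ Xs hc)).ofIsoColimit (Cofan.ext (Iso.refl _) fun j => ?_)⟩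
    exact (Category.comp_id _).trans (Category.comp_id _).symm
  · intro X a b
    have := hR (PathIdx X a b)
    refine ⟨(isColimitCofanMkObjOfIsColimit R _ _
      (isColimitPathCofan X a b)).ofIsoColimit (Cofan.ext (Iso.refl _) fun p => ?_)⟩
    simp only [Cofan.inj, Cofan.mk_ι_app, Functor.map_comp, eqToHom_map, Iso.refl_hom]
    exact Category.comp_id _

/-- If `R : V ⥤ W` is a coproduct-preserving functor between categories
with coproducts, then the induced functor `GR : GV ⥤ GW` on categories of enriched
graphs is distributive and path-like. -/
theorem mapG_distributive_and_pathLike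
    [HasInitial V] [HasInitial W] [HasCoproducts.{v} V] [HasCoproducts.{v} W]
    (R : V ⥤ W) (hR : ∀ J : Type v, PreservesColimitsOfShape (Discrete J) R) :
    Distributive (mapG R) (mapG_overSet R) ∧ PathLike (mapG R) (mapG_overSet R) :=
  mapG_distributive_and_pathLike_general R hR

end EGraph
end

section
/- For a set X of objects of a small category 𝓘 of generating cofibrations regarded as a discrete subcategory 𝓢, and 𝓘_𝓢 = 𝓘 ⊔ 𝓢 with J_𝓢 agreeing with J on 𝓘 and J_𝓢(s) = J(s)' on 𝓢, an R_𝓢-algebra structure on a morphism f : X → Y (for the awfs (L_𝓢, R_𝓢) cofibrantly generated by J_𝓢) is exactly an R-algebra structure (for the awfs generated by J) together with the property that f has the unique right lifting property with respect to the morphisms J(s), s ∈ 𝓢. -/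
open CategoryTheory Limits

universe v u w

variable {E : Type u} [Category.{v} E]

/-- The structure of coherent chosen diagonal fillers for all squares from the
generating cofibrations `J : 𝓘 ⥤ 𝓔^[1]` to `f`, natural in `𝓘`.  By Garner's small
object argument this is exactly an algebra structure on `f` for the monad `R` of the
algebraic weak factorisation system cofibrantly generated by `J`. -/
structure AlgFillers {I : Type w} [Category.{w} I] (J : I ⥤ Arrow E)
    {X Y : E} (f : X ⟶ Y) where
  lift : ∀ (i : I) (sq : J.obj i ⟶ Arrow.mk f), (J.obj i).right ⟶ X
  fac_left : ∀ (i : I) (sq : J.obj i ⟶ Arrow.mk f),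
    (J.obj i).hom ≫ lift i sq = sq.left
  fac_right : ∀ (i : I) (sq : J.obj i ⟶ Arrow.mk f), lift i sq ≫ f = sq.right
  natural : ∀ {i i' : I} (d : i ⟶ i') (sq : J.obj i' ⟶ Arrow.mk f),
    lift i (J.map d ≫ sq) = (J.map d).right ≫ lift i' sq

/-- Chosen diagonal fillers against a single arrow `g` (no naturality). -/
structure SingleFillers (g : Arrow E) {X Y : E} (f : X ⟶ Y) where
  lift : ∀ _sq : g ⟶ Arrow.mk f, g.right ⟶ X
  fac_left : ∀ sq : g ⟶ Arrow.mk f, g.hom ≫ lift sq = sq.left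
  fac_right : ∀ sq : g ⟶ Arrow.mk f, lift sq ≫ f = sq.right

/-- The unique right lifting property against `g`. -/
def UniqueRLP (g : Arrow E) {X Y : E} (f : X ⟶ Y) : Prop :=
  ∀ sq : g ⟶ Arrow.mk f, ∃! l : g.right ⟶ X, g.hom ≫ l = sq.left ∧ l ≫ f = sq.right

/-- The Bousfield construction `φ'` on an arrow `φ`: the map from the pushout of `φ`
along itself to the codomain, induced by identities. -/
noncomputable def bousfieldArrow [HasPushouts E] (g : Arrow E) : Arrow E :=
  Arrow.mk (pushout.desc (𝟙 g.right) (𝟙 g.right) rfl : pushout g.hom g.hom ⟶ g.right)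

/-!
The top of a square from `g'` to `f` is a pair of maps `g.right ⟶ X` agreeing on `g.left`, both
lifting one square from `g`; a filler exists iff these two maps coincide, and it is then their
common value. Hence fillers against `g'` form a subsingleton, inhabited iff lifts against `g` are
unique. An `R`-algebra structure supplies the existence of lifts against each `J(s)`, so over it
both sides are propositions equivalent to the unique right lifting property.
-/

def LiftsUnique (g : Arrow E) {X Y : E} (f : X ⟶ Y) : Prop :=
  ∀ l₁ l₂ : g.right ⟶ X, g.hom ≫ l₁ = g.hom ≫ l₂ → l₁ ≫ f = l₂ ≫ f → l₁ = l₂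

section Bousfield

variable [HasPushouts E] {g : Arrow E} {X Y : E} {f : X ⟶ Y}

lemma inl_comp_left_comp (sq : bousfieldArrow g ⟶ Arrow.mk f) :
    (pushout.inl g.hom g.hom ≫ sq.left) ≫ f = sq.right := by
  erw [Category.assoc, sq.w, pushout.inl_desc_assoc, Category.id_comp]

lemma inr_comp_left_comp (sq : bousfieldArrow g ⟶ Arrow.mk f) :
    (pushout.inr g.hom g.hom ≫ sq.left) ≫ f = sq.right := by
  erw [Category.assoc, sq.w, pushout.inr_desc_assoc, Category.id_comp]

namespace SingleFillers

lemma lift_eq_inl_comp (F : SingleFillers (bousfieldArrow g) f)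
    (sq : bousfieldArrow g ⟶ Arrow.mk f) : F.lift sq = pushout.inl g.hom g.hom ≫ sq.left := by
  erw [← F.fac_left sq, pushout.inl_desc_assoc, Category.id_comp]

lemma lift_eq_inr_comp (F : SingleFillers (bousfieldArrow g) f)
    (sq : bousfieldArrow g ⟶ Arrow.mk f) : F.lift sq = pushout.inr g.hom g.hom ≫ sq.left := by
  erw [← F.fac_left sq, pushout.inr_desc_assoc, Category.id_comp]

instance : Subsingleton (SingleFillers (bousfieldArrow g) f) where
  allEq F₁ F₂ := by
    obtain ⟨l₁, _, _⟩ := F₁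
    obtain ⟨l₂, _, _⟩ := F₂
    congr
    funext sq
    exact (lift_eq_inl_comp ⟨l₁, ‹_›, ‹_›⟩ sq).trans (lift_eq_inl_comp ⟨l₂, ‹_›, ‹_›⟩ sq).symm

lemma liftsUnique (F : SingleFillers (bousfieldArrow g) f) : LiftsUnique g f := by
  intro l₁ l₂ hg hf
  let sq : bousfieldArrow g ⟶ Arrow.mk f :=
    Arrow.homMk (pushout.desc l₁ l₂ hg) (l₁ ≫ f) (pushout.hom_ext
      (by erw [pushout.inl_desc_assoc, pushout.inl_desc_assoc, Category.id_comp]; rfl)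
      (by erw [pushout.inr_desc_assoc, pushout.inr_desc_assoc, Category.id_comp, hf]; rfl))
  have h₁ : F.lift sq = l₁ := (F.lift_eq_inl_comp sq).trans (pushout.inl_desc _ _ _)
  have h₂ : F.lift sq = l₂ := (F.lift_eq_inr_comp sq).trans (pushout.inr_desc _ _ _)
  exact h₁.symm.trans h₂

noncomputable def ofLiftsUnique (h : LiftsUnique g f) : SingleFillers (bousfieldArrow g) f where
  lift sq := pushout.inl g.hom g.hom ≫ sq.left
  fac_left sq := by
    have hlegs : pushout.inr g.hom g.hom ≫ sq.left = pushout.inl g.hom g.hom ≫ sq.left :=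
      h _ _ (pushout.condition_assoc _).symm
        ((inr_comp_left_comp sq).trans (inl_comp_left_comp sq).symm)
    apply pushout.hom_ext
    · exact (pushout.inl_desc_assoc _ _ _ _).trans (Category.id_comp _)
    · exact ((pushout.inr_desc_assoc _ _ _ _).trans (Category.id_comp _)).trans hlegs.symm
  fac_right := inl_comp_left_comp

end SingleFillers

end Bousfield

lemma UniqueRLP.liftsUnique {g : Arrow E} {X Y : E} {f : X ⟶ Y} (h : UniqueRLP g f) :
    LiftsUnique g f := by
  intro l₁ l₂ hg hf
  obtain ⟨l, -, hl⟩ := h (Arrow.homMk (g.hom ≫ l₁) (l₁ ≫ f) (by simp))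
  exact (hl l₁ ⟨rfl, rfl⟩).trans (hl l₂ ⟨hg.symm, hf.symm⟩).symm

lemma AlgFillers.uniqueRLP_of_liftsUnique {I : Type w} [Category.{w} I] {J : I ⥤ Arrow E}
    {X Y : E} {f : X ⟶ Y} (A : AlgFillers J f) {i : I} (h : LiftsUnique (J.obj i) f) :
    UniqueRLP (J.obj i) f := fun sq =>
  ⟨A.lift i sq, ⟨A.fac_left i sq, A.fac_right i sq⟩, fun _ hl =>
    h _ _ (hl.1.trans (A.fac_left i sq).symm) (hl.2.trans (A.fac_right i sq).symm)⟩

/-- For a set `𝓢` of objects of a small category `𝓘` of generating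
cofibrations, regarded as a discrete subcategory, let `J_𝓢 = J ⊔ (Bousfield primes of
J on 𝓢)`.  Then an `R_𝓢`-algebra structure on `f` — i.e. coherent natural fillers
against `J` together with fillers against the primed maps `J(s)'` for `s ∈ 𝓢` — is
exactly an `R`-algebra structure on `f` together with the property that `f` has the
unique right lifting property with respect to the morphisms `J(s)`, `s ∈ 𝓢`. -/
theorem semiStrict_algebras [HasPushouts E] {I : Type w} [Category.{w} I]
    (J : I ⥤ Arrow E) (S : Set I) {X Y : E} (f : X ⟶ Y) :
    ∃ e : (AlgFillers J f × ∀ s : S, SingleFillers (bousfieldArrow (J.obj s.1)) f) ≃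
        (AlgFillers J f × PLift (∀ s ∈ S, UniqueRLP (J.obj s) f)),
      ∀ x, (e x).1 = x.1 :=
  ⟨Equiv.prodCongrRight fun A => equivOfSubsingletonOfSubsingleton
      (fun F => ⟨fun s hs => A.uniqueRLP_of_liftsUnique (F ⟨s, hs⟩).liftsUnique⟩)
      (fun h s => .ofLiftsUnique (h.down s.1 s.2).liftsUnique),
    fun _ => rfl⟩
end

section
/- A T_{≤n}-operad A is reduced (A_p is a singleton for every linear tree p) if and only if the projection p_A : A × RGr_{≤n} → RGr_{≤n} is an isomorphism; consequently the category of reduced T_{≤n}-operads is a bipullback of the functor Δ_{RGr} : Op(T_{≤n}) → Op(T_{≤n})/RGr_{≤n} (pullback along RGr_{≤n} ↪ T_{≤n}) against the point 1_{RGr_{≤n}}. -/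
open CategoryTheory Limits

universe v u

/-- `k`-stage trees (globular pasting schemes): a `(k+1)`-stage tree is a list of
`k`-stage trees. -/
def Tr : ℕ → Type
  | 0 => PUnit
  | n + 1 => List (Tr n)

/-- Truncation of a `(k+1)`-stage tree to a `k`-stage tree (the common source and
target in the globular set of trees). -/
def trunc : ∀ {n : ℕ}, Tr (n + 1) → Tr n
  | 0, _ => PUnit.unit
  | _ + 1, l => l.map trunc

/-- A tree is linear when it has exactly one leaf, i.e. is of the form `z^s U_{k-s}`. -/
def linear : ∀ {n : ℕ}, Tr n → Prop
  | 0, _ => True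
  | _ + 1, [] => True
  | _ + 1, [p] => linear p
  | _ + 1, _ :: _ :: _ => False

/-- The linear tree `z^{n-h} U_h` of stage `n` and height `h` (for `h ≤ n`). -/
def lin : ∀ (n _h : ℕ), Tr n
  | 0, _ => PUnit.unit
  | n + 1, 0 => ([] : List (Tr n))
  | n + 1, h + 1 => [lin n h]

theorem linear_trunc : ∀ {n : ℕ} (p : Tr (n + 1)), linear p → linear (trunc p)
  | 0, _, _ => trivial
  | _ + 1, [], _ => trivial
  | _ + 1, [p], h => linear_trunc p h
  | _ + 1, _ :: _ :: _, h => h.elim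

/-- `n`-globular sets (with cells concentrated in dimensions `≤ n`). -/
structure GlobSet (n : ℕ) where
  cells : ℕ → Type
  src : ∀ k, cells (k + 1) → cells k
  tgt : ∀ k, cells (k + 1) → cells k
  glob_ss : ∀ k (x : cells (k + 2)), src k (src (k + 1) x) = src k (tgt (k + 1) x)
  glob_tt : ∀ k (x : cells (k + 2)), tgt k (src (k + 1) x) = tgt k (tgt (k + 1) x)
  above : ∀ k, n < k → IsEmpty (cells k)

namespace GlobSet

/-- Morphisms of globular sets. -/
structure Hom {n : ℕ} (X Y : GlobSet n) where
  app : ∀ k, X.cells k → Y.cells k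
  comm_src : ∀ k (x : X.cells (k + 1)), Y.src k (app (k + 1) x) = app k (X.src k x)
  comm_tgt : ∀ k (x : X.cells (k + 1)), Y.tgt k (app (k + 1) x) = app k (X.tgt k x)

theorem Hom.ext' {n : ℕ} {X Y : GlobSet n} {F G : Hom X Y}
    (h : ∀ k, F.app k = G.app k) : F = G := by
  cases F; cases G
  have : _ = _ := funext h
  cases this; rfl

instance {n : ℕ} : Category (GlobSet n) where
  Hom := Hom
  id X := ⟨fun _ => id, fun _ _ => rfl, fun _ _ => rfl⟩
  comp F G := ⟨fun k => G.app k ∘ F.app k,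
    fun k x => by simp [Function.comp_apply, G.comm_src, F.comm_src],
    fun k x => by simp [Function.comp_apply, G.comm_tgt, F.comm_tgt]⟩
  id_comp F := Hom.ext' (fun k => rfl)
  comp_id F := Hom.ext' (fun k => rfl)
  assoc F G H := Hom.ext' (fun k => rfl)

@[simp] theorem comp_app {n : ℕ} {X Y Z : GlobSet n} (F : X ⟶ Y) (G : Y ⟶ Z) (k : ℕ) :
    (F ≫ G).app k = G.app k ∘ F.app k := rfl

@[simp] theorem id_app {n : ℕ} (X : GlobSet n) (k : ℕ) :
    (𝟙 X : X ⟶ X).app k = id := rfl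

end GlobSet

/-- The globular set `Tr_{≤n} = T_{≤n}(1)` of trees, with sources and targets given
by truncation. -/
def treeGlob (n : ℕ) : GlobSet n where
  cells k := PLift (k ≤ n) × Tr k
  src k x := ⟨⟨Nat.le_of_succ_le x.1.down⟩, trunc x.2⟩
  tgt k x := ⟨⟨Nat.le_of_succ_le x.1.down⟩, trunc x.2⟩
  glob_ss k x := Prod.ext (Subsingleton.elim _ _) rfl
  glob_tt k x := Prod.ext (Subsingleton.elim _ _) rfl
  above k h := ⟨fun x => absurd x.1.down (by omega)⟩

/-- The sub-globular set `LinTr_{≤n}` of linear trees. -/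
def linGlob (n : ℕ) : GlobSet n where
  cells k := PLift (k ≤ n) × { p : Tr k // linear p }
  src k x := ⟨⟨Nat.le_of_succ_le x.1.down⟩, ⟨trunc x.2.1, linear_trunc _ x.2.2⟩⟩
  tgt k x := ⟨⟨Nat.le_of_succ_le x.1.down⟩, ⟨trunc x.2.1, linear_trunc _ x.2.2⟩⟩
  glob_ss k x := Prod.ext (Subsingleton.elim _ _) rfl
  glob_tt k x := Prod.ext (Subsingleton.elim _ _) rfl
  above k h := ⟨fun x => absurd x.1.down (by omega)⟩

/-- The inclusion of the linear trees into all trees. -/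
def linIncl (n : ℕ) : linGlob n ⟶ treeGlob n where
  app k x := ⟨x.1, x.2.1⟩
  comm_src k x := rfl
  comm_tgt k x := rfl

/-- Reflexive `n`-globular sets: globular sets with chosen common sections of the
source and target maps. -/
structure ReflGlob (n : ℕ) where
  G : GlobSet n
  z : ∀ k, k < n → G.cells k → G.cells (k + 1)
  z_src : ∀ k (h : k < n) (x : G.cells k), G.src k (z k h x) = x
  z_tgt : ∀ k (h : k < n) (x : G.cells k), G.tgt k (z k h x) = x

/-- Morphisms of reflexive globular sets. -/
structure ReflHom {n : ℕ} (X Y : ReflGlob n) where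
  F : X.G ⟶ Y.G
  comm_z : ∀ k (h : k < n) (x : X.G.cells k),
    Y.z k h (F.app k x) = F.app (k + 1) (X.z k h x)

theorem ReflHom.ext' {n : ℕ} {X Y : ReflGlob n} {F G : ReflHom X Y}
    (h : F.F = G.F) : F = G := by
  cases F; cases G; cases h; rfl

instance {n : ℕ} : Category (ReflGlob n) where
  Hom := ReflHom
  id X := ⟨𝟙 X.G, fun _ _ _ => rfl⟩
  comp F G := ⟨F.F ≫ G.F, fun k h x => by
    simp only [GlobSet.comp_app, Function.comp_apply, G.comm_z, F.comm_z]⟩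
  id_comp F := ReflHom.ext' (Category.id_comp _)
  comp_id F := ReflHom.ext' (Category.comp_id _)
  assoc F G H := ReflHom.ext' (Category.assoc _ _ _)

/-- `T_{≤n}`-collections over `Set`, described concretely: a family of sets of
operations indexed by trees of each stage `≤ n`, with source and target maps over
truncation.  (The underlying collections of `T_{≤n}`-operads over `Set`.) -/
structure Coll (n : ℕ) where
  fib : ∀ k : ℕ, k ≤ n → Tr k → Type
  s : ∀ (k : ℕ) (h : k + 1 ≤ n) (p : Tr (k + 1)),
    fib (k + 1) h p → fib k (Nat.le_of_succ_le h) (trunc p)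
  t : ∀ (k : ℕ) (h : k + 1 ≤ n) (p : Tr (k + 1)),
    fib (k + 1) h p → fib k (Nat.le_of_succ_le h) (trunc p)
  glob_ss : ∀ (k : ℕ) (h : k + 2 ≤ n) (p : Tr (k + 2)) (x : fib (k + 2) h p),
    s k _ _ (s (k + 1) h p x) = s k _ _ (t (k + 1) h p x)
  glob_tt : ∀ (k : ℕ) (h : k + 2 ≤ n) (p : Tr (k + 2)) (x : fib (k + 2) h p),
    t k _ _ (s (k + 1) h p x) = t k _ _ (t (k + 1) h p x)

namespace Coll

variable {n : ℕ}

/-- Morphisms of collections. -/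
structure Hom (A B : Coll n) where
  app : ∀ (k : ℕ) (h : k ≤ n) (p : Tr k), A.fib k h p → B.fib k h p
  comm_s : ∀ (k : ℕ) (h : k + 1 ≤ n) (p : Tr (k + 1)) (x : A.fib (k + 1) h p),
    B.s k h p (app (k + 1) h p x) = app k _ (trunc p) (A.s k h p x)
  comm_t : ∀ (k : ℕ) (h : k + 1 ≤ n) (p : Tr (k + 1)) (x : A.fib (k + 1) h p),
    B.t k h p (app (k + 1) h p x) = app k _ (trunc p) (A.t k h p x)

theorem Hom.ext' {A B : Coll n} {F G : Hom A B} (h : ∀ k hk p, F.app k hk p = G.app k hk p) :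
    F = G := by
  cases F; cases G
  have : _ = _ := funext fun k => funext fun hk => funext fun p => h k hk p
  cases this; rfl

instance : Category (Coll n) where
  Hom := Hom
  id A := ⟨fun _ _ _ => id, fun _ _ _ _ => rfl, fun _ _ _ _ => rfl⟩
  comp F G := ⟨fun k h p => G.app k h p ∘ F.app k h p,
    fun k h p x => by simp [Function.comp_apply, G.comm_s, F.comm_s],
    fun k h p x => by simp [Function.comp_apply, G.comm_t, F.comm_t]⟩
  id_comp F := Hom.ext' (fun _ _ _ => rfl)
  comp_id F := Hom.ext' (fun _ _ _ => rfl)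
  assoc F G H := Hom.ext' (fun _ _ _ => rfl)

end Coll

/-- The subterminal collection `RGr_{≤n}` of linear trees. -/
def RGrColl (n : ℕ) : Coll n where
  fib _k _ p := PLift (linear p)
  s _ _ _ x := ⟨linear_trunc _ x.down⟩
  t _ _ _ x := ⟨linear_trunc _ x.down⟩
  glob_ss _ _ _ _ := Subsingleton.elim _ _
  glob_tt _ _ _ _ := Subsingleton.elim _ _

/-- Binary product of collections, formed fibrewise. -/
def prodColl {n : ℕ} (A B : Coll n) : Coll n where
  fib k h p := A.fib k h p × B.fib k h p
  s k h p x := (A.s k h p x.1, B.s k h p x.2)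
  t k h p x := (A.t k h p x.1, B.t k h p x.2)
  glob_ss k h p x := Prod.ext (A.glob_ss k h p x.1) (B.glob_ss k h p x.2)
  glob_tt k h p x := Prod.ext (A.glob_tt k h p x.1) (B.glob_tt k h p x.2)

/-- The projection `p_A : A × RGr_{≤n} ⟶ RGr_{≤n}`, sending each operation of linear
arity to its arity. -/
def projRGr {n : ℕ} (A : Coll n) : prodColl A (RGrColl n) ⟶ RGrColl n where
  app _ _ _ x := x.2
  comm_s _ _ _ _ := rfl
  comm_t _ _ _ _ := rfl

/-- A collection (and in particular a `T_{≤n}`-operad) is reduced when it has exactly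
one operation of each linear arity. -/
def Reduced {n : ℕ} (A : Coll n) : Prop :=
  ∀ (k : ℕ) (h : k ≤ n) (p : Tr k), linear p →
    Nonempty (A.fib k h p) ∧ Subsingleton (A.fib k h p)

/-- The product of a morphism with the identity of `RGr`. -/
def prodHom {n : ℕ} {A B : Coll n} (f : A ⟶ B) :
    prodColl A (RGrColl n) ⟶ prodColl B (RGrColl n) where
  app k h p x := (f.app k h p x.1, x.2)
  comm_s k h p x := Prod.ext (f.comm_s k h p x.1) rfl
  comm_t k h p x := Prod.ext (f.comm_t k h p x.1) rfl

/-- The functor `Δ_{RGr} : Coll ⥤ Coll/RGr` (pullback along `RGr ↪ T_{≤n}`,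
described fibrewise). -/
def deltaRGr (n : ℕ) : Coll n ⥤ Over (RGrColl n) where
  obj A := Over.mk (projRGr A)
  map {A B} f := Over.homMk (prodHom f) (Coll.Hom.ext' (fun _ _ _ => rfl))
  map_id A := by
    apply Over.OverMorphism.ext
    exact Coll.Hom.ext' (fun _ _ _ => rfl)
  map_comp f g := by
    apply Over.OverMorphism.ext
    exact Coll.Hom.ext' (fun _ _ _ => rfl)

/-- The pseudo-fibre of `Δ_{RGr}` over the point `1_{RGr}`: objects are collections
`A` equipped with an isomorphism `Δ(A) ≅ 1_{RGr}` in `Coll/RGr`. -/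
structure PsFib (n : ℕ) where
  A : Coll n
  e : (deltaRGr n).obj A ≅ Over.mk (𝟙 (RGrColl n))

/-- Morphisms in the pseudo-fibre. -/
structure PsFibHom {n : ℕ} (x y : PsFib n) where
  f : x.A ⟶ y.A
  comm : (deltaRGr n).map f ≫ y.e.hom = x.e.hom

theorem PsFibHom.ext' {n : ℕ} {x y : PsFib n} {F G : PsFibHom x y} (h : F.f = G.f) :
    F = G := by
  cases F; cases G; cases h; rfl

instance {n : ℕ} : Category (PsFib n) where
  Hom := PsFibHom
  id x := ⟨𝟙 _, by simp⟩
  comp F G := ⟨F.f ≫ G.f, by rw [Functor.map_comp, Category.assoc, G.comm, F.comm]⟩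
  id_comp F := PsFibHom.ext' (Category.id_comp _)
  comp_id F := PsFibHom.ext' (Category.comp_id _)
  assoc F G H := PsFibHom.ext' (Category.assoc _ _ _)

/-! Fibrewise, `p_A` at a tree `p` is the projection `A_p × [p linear] → [p linear]`, which is
bijective exactly when `A_p` is a singleton or `p` is not linear; and a morphism of collections is
an isomorphism exactly when it is bijective on every fibre.

For the bipullback: an isomorphism `Δ(A) ≅ 1_{RGr}` over `RGr` must have underlying map `p_A`, so
one exists precisely when `A` is reduced, and it is then unique. Hence forgetting it is a fully
faithful functor from the pseudo-fibre onto the reduced collections. -/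

theorem Prod.bijective_snd_iff {α β : Type*} :
    Function.Bijective (Prod.snd : α × β → β) ↔ (Nonempty β → Nonempty α ∧ Subsingleton α) := by
  constructor
  · rintro ⟨hinj, hsurj⟩ ⟨b⟩
    exact ⟨⟨(hsurj b).choose.1⟩, ⟨fun a a' => congrArg Prod.fst (@hinj (a, b) (a', b) rfl)⟩⟩
  · intro h
    refine ⟨fun x y hxy => Prod.ext ?_ hxy, fun b => ?_⟩
    · exact @Subsingleton.elim _ (h ⟨x.2⟩).2 _ _
    · exact ⟨((h ⟨b⟩).1.some, b), rfl⟩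

namespace Coll

variable {n : ℕ}

theorem isIso_iff_bijective {A B : Coll n} (f : A ⟶ B) :
    IsIso f ↔ ∀ k h p, Function.Bijective (f.app k h p) := by
  constructor
  · intro _ k h p
    refine Function.bijective_iff_has_inverse.2 ⟨(inv f).app k h p, fun x => ?_, fun y => ?_⟩
    · exact congrArg (fun g : A ⟶ A => g.app k h p x) (IsIso.hom_inv_id f)
    · exact congrArg (fun g : B ⟶ B => g.app k h p y) (IsIso.inv_hom_id f)
  · intro hf
    let e k h p := Equiv.ofBijective _ (hf k h p)
    let g : B ⟶ A :=
      { app k h p := (e k h p).symm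
        comm_s k h p y := (hf k _ _).1 <| by
          simp only [← f.comm_s, e, Equiv.ofBijective_apply_symm_apply]
        comm_t k h p y := (hf k _ _).1 <| by
          simp only [← f.comm_t, e, Equiv.ofBijective_apply_symm_apply] }
    refine ⟨g, ?_, ?_⟩
    · exact Hom.ext' fun k h p => funext fun x => (e k h p).symm_apply_apply x
    · exact Hom.ext' fun k h p => funext fun y => (e k h p).apply_symm_apply y

end Coll

theorem reduced_iff_isIso_projRGr {n : ℕ} (A : Coll n) : Reduced A ↔ IsIso (projRGr A) := by
  rw [Coll.isIso_iff_bijective]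
  refine forall_congr' fun k => forall_congr' fun h => forall_congr' fun p => ?_
  have := Prod.bijective_snd_iff (α := A.fib k h p) (β := PLift (linear p))
  rw [nonempty_plift, nonempty_prop] at this
  exact this.symm

namespace PsFib

variable {n : ℕ}

def forget (n : ℕ) : PsFib n ⥤ Coll n where
  obj x := x.A
  map F := F.f

theorem e_hom_left (x : PsFib n) : x.e.hom.left = projRGr x.A :=
  (Category.comp_id _).symm.trans (Over.w x.e.hom)

theorem reduced (x : PsFib n) : Reduced x.A := by
  rw [reduced_iff_isIso_projRGr, ← e_hom_left]
  exact (Over.forget _).map_isIso x.e.hom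

noncomputable def ofReduced {A : Coll n} (hA : Reduced A) : PsFib n where
  A := A
  e := Over.isoMk (@asIso _ _ _ _ (projRGr A) ((reduced_iff_isIso_projRGr A).1 hA))
    (Category.comp_id _)

instance : (forget n).Faithful where
  map_injective h := PsFibHom.ext' h

instance : (forget n).Full where
  map_surjective f := by
    refine ⟨⟨f, Over.OverMorphism.ext ?_⟩, rfl⟩
    rw [Over.comp_left, e_hom_left, e_hom_left]
    exact Coll.Hom.ext' fun _ _ _ => rfl

def toReduced (n : ℕ) : PsFib n ⥤ ObjectProperty.FullSubcategory (Reduced (n := n)) :=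
  ObjectProperty.lift Reduced (forget n) reduced

instance : (toReduced n).Faithful := ObjectProperty.instFaithfulFullSubcategoryLift _ _ _

instance : (toReduced n).Full := ObjectProperty.instFullFullSubcategoryLift _ _ _

instance : (toReduced n).EssSurj where
  mem_essImage A := ⟨ofReduced A.property, ⟨Iso.refl _⟩⟩

instance : (toReduced n).IsEquivalence where

end PsFib

/-- A `T_{≤n}`-operad `A` is reduced (each `A_p` for linear `p` is
a singleton) if and only if the projection `p_A : A × RGr_{≤n} ⟶ RGr_{≤n}` is an
isomorphism; consequently the category of reduced operads is a bipullback of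
`Δ_{RGr} : Op ⥤ Op/RGr` against the point `1_{RGr}`, i.e. the full subcategory of
reduced objects is equivalent to the pseudo-fibre of `Δ_{RGr}` over `1_{RGr}`.
(Both conditions are conditions on, and are detected by, underlying collections,
which is how they are stated here.) -/
theorem reduced_iff_proj_iso (n : ℕ) :
    (∀ A : Coll n, Reduced A ↔ IsIso (projRGr A)) ∧
      Nonempty (ObjectProperty.FullSubcategory (Reduced (n := n)) ≌ PsFib n) :=
  ⟨reduced_iff_isIso_projRGr, ⟨(PsFib.toReduced n).asEquivalence.symm⟩⟩
end
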